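/- arXiv:1712.10099 — 2 statements merged into one kernel-verified Lean document; each statement's English description precedes it below -/
import Mathlib

section
/- Let Z_1,...,Z_p be independent standard normal random variables and for θ with all θ_i > 0 let F(t;θ) be the distribution function of T_θ = Σ_{i=1}^p Z_i²/θ_i. Then for each i and every t > 0, the second partial derivative ∂²F(t;θ)/∂θ_i² is strictly negative; i.e., F(t;θ) is strictly concave in each coordinate θ_i. -/
open MeasureTheory ProbabilityTheory Real

/-- Law of a vector of `p` i.i.d. standard normal random variables. -/
noncomputable def stdGaussianPi (p : ℕ) : Measure (Fin p → ℝ) :=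
  Measure.pi fun _ => gaussianReal 0 1

/-- `F(t;θ) = P(∑ Z i ^ 2 / θ i ≤ t)` for i.i.d. standard normals `Z i`. -/
noncomputable def Fcdf (p : ℕ) (θ : Fin p → ℝ) (t : ℝ) : ℝ :=
  (stdGaussianPi p {z | ∑ i, (z i) ^ 2 / θ i ≤ t}).toReal

/-!
Condition on every coordinate except `Z i`. With `x = θ i` and
`U = t - ∑_{j ≠ i} Z_j² / θ_j`, we get `F(t; θ) = E[G(x U)]`, where `G(c) = P(Z² ≤ c)` is the
χ²₁ distribution function. Its density `g(c) = e^{-c/2} / √(2πc)` is strictly decreasing on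
`(0, ∞)`, so differentiating twice under the expectation gives `∂²F/∂x² = E[U² g'(x U)]`, whose
integrand is `≤ 0` everywhere and `< 0` on the event `U > 0`, which has positive probability
because `t > 0`. Since `U ≤ t`, all the integrands are bounded uniformly for `x` away from `0`.
-/

open Set Filter Topology

instance {m : ℝ} {v : NNReal} [NeZero v] : (gaussianReal m v).IsOpenPosMeasure :=
  (gaussianReal_absolutelyContinuous' m (NeZero.ne v)).isOpenPosMeasure

noncomputable def chiSqOneCDF (c : ℝ) : ℝ := (gaussianReal 0 1 {y | y ^ 2 ≤ c}).toReal

/-- Vanishes for `c ≤ 0`, where `√(2 * π * c) = 0`. -/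
noncomputable def chiSqOnePDF (c : ℝ) : ℝ := exp (-c / 2) / √(2 * π * c)

noncomputable def chiSqOnePDFDeriv (c : ℝ) : ℝ := -((1 + c⁻¹) / 2) * chiSqOnePDF c

lemma chiSqOneCDF_of_neg {c : ℝ} (hc : c < 0) : chiSqOneCDF c = 0 := by
  have : {y : ℝ | y ^ 2 ≤ c} = ∅ :=
    eq_empty_of_forall_notMem fun y hy => (hc.trans_le (sq_nonneg y)).not_ge hy
  simp [chiSqOneCDF, this]

lemma chiSqOneCDF_of_nonneg {c : ℝ} (hc : 0 ≤ c) :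
    chiSqOneCDF c = ∫ y in -√c..√c, gaussianPDFReal 0 1 y := by
  have hIcc : {y : ℝ | y ^ 2 ≤ c} = Icc (-√c) √c := by ext y; simp [Real.sq_le hc]
  rw [chiSqOneCDF, hIcc, gaussianReal_apply_eq_integral 0 one_ne_zero,
    ENNReal.toReal_ofReal
      (setIntegral_nonneg measurableSet_Icc fun y _ => gaussianPDFReal_nonneg 0 1 y),
    intervalIntegral.integral_of_le (by linarith [sqrt_nonneg c]), integral_Icc_eq_integral_Ioc]

lemma monotone_gaussianReal_setOf_sq_le :
    Monotone fun c : ℝ => gaussianReal 0 1 {y | y ^ 2 ≤ c} :=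
  fun _ _ h => measure_mono fun _ hy => le_trans hy h

lemma monotone_chiSqOneCDF : Monotone chiSqOneCDF := fun _ _ h =>
  ENNReal.toReal_mono (measure_ne_top _ _) (monotone_gaussianReal_setOf_sq_le h)

lemma abs_chiSqOneCDF_le_one (c : ℝ) : |chiSqOneCDF c| ≤ 1 := by
  rw [chiSqOneCDF, abs_of_nonneg ENNReal.toReal_nonneg]
  exact ENNReal.toReal_le_of_le_ofReal zero_le_one (by simpa using prob_le_one)

@[fun_prop]
lemma measurable_chiSqOneCDF : Measurable chiSqOneCDF := monotone_chiSqOneCDF.measurable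

lemma chiSqOnePDF_of_nonpos {c : ℝ} (hc : c ≤ 0) : chiSqOnePDF c = 0 := by
  have h2π : (0 : ℝ) ≤ 2 * π := by positivity
  simp [chiSqOnePDF, sqrt_eq_zero'.2 (mul_nonpos_of_nonneg_of_nonpos h2π hc)]

lemma chiSqOnePDF_pos {c : ℝ} (hc : 0 < c) : 0 < chiSqOnePDF c := by
  unfold chiSqOnePDF; positivity

lemma chiSqOnePDFDeriv_neg {c : ℝ} (hc : 0 < c) : chiSqOnePDFDeriv c < 0 := by
  unfold chiSqOnePDFDeriv
  have := chiSqOnePDF_pos hc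
  have : 0 < (1 + c⁻¹) / 2 := by positivity
  nlinarith

lemma chiSqOnePDFDeriv_nonpos (c : ℝ) : chiSqOnePDFDeriv c ≤ 0 := by
  rcases le_or_gt c 0 with hc | hc
  · simp [chiSqOnePDFDeriv, chiSqOnePDF_of_nonpos hc]
  · exact (chiSqOnePDFDeriv_neg hc).le

@[fun_prop]
lemma measurable_chiSqOnePDF : Measurable chiSqOnePDF := by
  unfold chiSqOnePDF; fun_prop

@[fun_prop]
lemma measurable_chiSqOnePDFDeriv : Measurable chiSqOnePDFDeriv := by
  unfold chiSqOnePDFDeriv; fun_prop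

lemma hasDerivAt_chiSqOneCDF {c : ℝ} (hc : c ≠ 0) :
    HasDerivAt chiSqOneCDF (chiSqOnePDF c) c := by
  rcases hc.lt_or_gt with hc | hc
  · rw [chiSqOnePDF_of_nonpos hc.le]
    exact (hasDerivAt_const c 0).congr_of_eventuallyEq
      (eventually_lt_nhds hc |>.mono fun _ h => chiSqOneCDF_of_neg h)
  set Φ₀ : ℝ → ℝ := fun b => ∫ y in (0 : ℝ)..b, gaussianPDFReal 0 1 y
  have hφ : Continuous (gaussianPDFReal 0 1) := by unfold gaussianPDFReal; fun_prop
  have hΦ₀ (b : ℝ) : HasDerivAt Φ₀ (gaussianPDFReal 0 1 b) b :=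
    (hφ.integral_hasStrictDerivAt 0 b).hasDerivAt
  have hsqrt := hasDerivAt_sqrt hc.ne'
  have hdiff := ((hΦ₀ _).comp c hsqrt).sub ((hΦ₀ _).comp c hsqrt.neg)
  have heq : chiSqOneCDF =ᶠ[𝓝 c] fun c => Φ₀ √c - Φ₀ (-√c) := by
    filter_upwards [eventually_gt_nhds hc] with c' hc'
    rw [chiSqOneCDF_of_nonneg hc'.le, intervalIntegral.integral_interval_sub_left
      (hφ.intervalIntegrable _ _) (hφ.intervalIntegrable _ _)]
  refine (hdiff.congr_of_eventuallyEq heq).congr_deriv ?_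
  simp only [chiSqOnePDF, gaussianPDFReal, Pi.neg_apply, NNReal.coe_one, sub_zero, neg_sq,
    sq_sqrt hc.le, sqrt_mul' _ hc.le]
  field_simp
  ring

lemma hasDerivAt_chiSqOnePDF {c : ℝ} (hc : c ≠ 0) :
    HasDerivAt chiSqOnePDF (chiSqOnePDFDeriv c) c := by
  rcases hc.lt_or_gt with hc | hc
  · rw [chiSqOnePDFDeriv, chiSqOnePDF_of_nonpos hc.le, mul_zero]
    exact (hasDerivAt_const c 0).congr_of_eventuallyEq
      (eventually_lt_nhds hc |>.mono fun _ h => chiSqOnePDF_of_nonpos h.le)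
  have h2πc : 0 < 2 * π * c := by positivity
  have hexp : HasDerivAt (fun c => exp (-c / 2)) (exp (-c / 2) * (-1 / 2)) c :=
    ((hasDerivAt_id c).neg.div_const 2).exp
  have hsqrt : HasDerivAt (fun c => √(2 * π * c)) (2 * π / (2 * √(2 * π * c))) c := by
    simpa using ((hasDerivAt_id c).const_mul (2 * π)).sqrt h2πc.ne'
  refine (hexp.div hsqrt (sqrt_pos.2 h2πc).ne').congr_deriv ?_
  have hs : 0 < √(2 * π * c) := sqrt_pos.2 h2πc
  have hs2 : √(2 * π * c) ^ 2 = 2 * π * c := sq_sqrt h2πc.le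
  simp only [chiSqOnePDFDeriv, chiSqOnePDF]
  generalize √(2 * π * c) = s at hs hs2 ⊢
  field_simp
  linear_combination hs2

lemma hasDerivAt_comp_mul_const_of_forall_ne_zero {g g' : ℝ → ℝ}
    (hg : ∀ c ≠ 0, HasDerivAt g (g' c) c) (u : ℝ) {x : ℝ} (hx : x ≠ 0) :
    HasDerivAt (fun x => g (x * u)) (u * g' (x * u)) x := by
  rcases eq_or_ne u 0 with rfl | hu
  · simpa using hasDerivAt_const x (g 0)
  · rw [mul_comm u]
    exact (hg _ (mul_ne_zero hx hu)).comp x (hasDerivAt_mul_const u)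

lemma abs_mul_chiSqOnePDF_le {b x u t : ℝ} (hb : 0 < b) (hbx : b ≤ x) (hut : u ≤ t) :
    |u * chiSqOnePDF (x * u)| ≤ √t / √(2 * π * b) := by
  have hx : 0 < x := hb.trans_le hbx
  rcases le_or_gt u 0 with hu | hu
  · rw [chiSqOnePDF_of_nonpos (mul_nonpos_of_nonneg_of_nonpos hx.le hu), mul_zero, abs_zero]
    positivity
  calc |u * chiSqOnePDF (x * u)| = exp (-(x * u) / 2) * (√u / √(2 * π * x)) := by
        rw [abs_of_pos (mul_pos hu (chiSqOnePDF_pos (mul_pos hx hu))), chiSqOnePDF,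
          ← mul_assoc, sqrt_mul (by positivity) u]
        field_simp
        rw [sq_sqrt hu.le]
    _ ≤ 1 * (√t / √(2 * π * b)) := by
        gcongr
        exact exp_le_one_iff.2 (by nlinarith)
    _ = √t / √(2 * π * b) := one_mul _

lemma mul_mul_chiSqOnePDFDeriv {x : ℝ} (hx : x ≠ 0) (u : ℝ) :
    u * (u * chiSqOnePDFDeriv (x * u)) = -((u + x⁻¹) / 2) * (u * chiSqOnePDF (x * u)) := by
  rcases eq_or_ne u 0 with rfl | hu
  · simp
  · rw [chiSqOnePDFDeriv]
    field_simp

lemma abs_mul_mul_chiSqOnePDFDeriv_le {b x u t : ℝ} (hb : 0 < b) (hbx : b ≤ x) (ht : 0 ≤ t)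
    (hut : u ≤ t) :
    |u * (u * chiSqOnePDFDeriv (x * u))| ≤ (t + b⁻¹) / 2 * (√t / √(2 * π * b)) := by
  have hx : 0 < x := hb.trans_le hbx
  rcases le_or_gt u 0 with hu | hu
  · rw [chiSqOnePDFDeriv, chiSqOnePDF_of_nonpos (mul_nonpos_of_nonneg_of_nonpos hx.le hu)]
    simp only [mul_zero, abs_zero]
    positivity
  rw [mul_mul_chiSqOnePDFDeriv hx.ne', abs_mul, abs_neg, abs_of_pos (by positivity)]
  exact mul_le_mul (by linarith [inv_anti₀ hb hbx]) (abs_mul_chiSqOnePDF_le hb hbx hut)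
    (abs_nonneg _) (by positivity)

section Mixture

variable {α : Type*} [MeasurableSpace α] {μ : Measure α} [IsFiniteMeasure μ]

lemma hasDerivAt_integral_of_forall_abs_le {F F' : ℝ → α → ℝ} {s : Set ℝ} {x : ℝ}
    (hs : s ∈ 𝓝 x) (hF_meas : ∀ y, AEStronglyMeasurable (F y) μ)
    (hF'_meas : AEStronglyMeasurable (F' x) μ)
    {C D : ℝ} (hF : ∀ᵐ a ∂μ, |F x a| ≤ C) (hF' : ∀ᵐ a ∂μ, ∀ y ∈ s, |F' y a| ≤ D)
    (h_diff : ∀ᵐ a ∂μ, ∀ y ∈ s, HasDerivAt (F · a) (F' y a) y) :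
    HasDerivAt (fun y => ∫ a, F y a ∂μ) (∫ a, F' x a ∂μ) x :=
  (hasDerivAt_integral_of_dominated_loc_of_deriv_le hs (.of_forall hF_meas)
    (.of_bound (hF_meas x) C hF) hF'_meas hF' (integrable_const D) h_diff).2

variable {v : α → ℝ} {t : ℝ}

lemma hasDerivAt_integral_chiSqOneCDF_mul (hv : Measurable v)
    (hvt : ∀ᵐ a ∂μ, v a ≤ t) {x : ℝ} (hx : 0 < x) :
    HasDerivAt (fun x => ∫ a, chiSqOneCDF (x * v a) ∂μ)
      (∫ a, v a * chiSqOnePDF (x * v a) ∂μ) x := by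
  have hs : Ioi (x / 2) ∈ 𝓝 x := Ioi_mem_nhds (by linarith)
  refine hasDerivAt_integral_of_forall_abs_le hs
    (fun y => (by fun_prop : Measurable _).aestronglyMeasurable) (by fun_prop)
    (.of_forall fun a => abs_chiSqOneCDF_le_one _)
    (hvt.mono fun a ha y hy => abs_mul_chiSqOnePDF_le (half_pos hx) (le_of_lt hy) ha)
    (.of_forall fun a y hy => hasDerivAt_comp_mul_const_of_forall_ne_zero
      (fun _ => hasDerivAt_chiSqOneCDF) (v a) (half_pos hx |>.trans hy).ne')

lemma hasDerivAt_integral_mul_chiSqOnePDF_mul (hv : Measurable v) (ht : 0 ≤ t)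
    (hvt : ∀ᵐ a ∂μ, v a ≤ t) {x : ℝ} (hx : 0 < x) :
    HasDerivAt (fun x => ∫ a, v a * chiSqOnePDF (x * v a) ∂μ)
      (∫ a, v a * (v a * chiSqOnePDFDeriv (x * v a)) ∂μ) x := by
  have hs : Ioi (x / 2) ∈ 𝓝 x := Ioi_mem_nhds (by linarith)
  refine hasDerivAt_integral_of_forall_abs_le hs
    (fun y => by fun_prop) (by fun_prop)
    (hvt.mono fun a ha => abs_mul_chiSqOnePDF_le hx le_rfl ha)
    (hvt.mono fun a ha y hy =>
      abs_mul_mul_chiSqOnePDFDeriv_le (half_pos hx) (le_of_lt hy) ht ha)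
    (.of_forall fun a y hy => (hasDerivAt_comp_mul_const_of_forall_ne_zero
      (fun _ => hasDerivAt_chiSqOnePDF) (v a) (half_pos hx |>.trans hy).ne').const_mul (v a))

lemma integral_mul_mul_chiSqOnePDFDeriv_neg (hv : Measurable v) (ht : 0 ≤ t)
    (hvt : ∀ᵐ a ∂μ, v a ≤ t) (hpos : 0 < μ {a | 0 < v a}) {x : ℝ} (hx : 0 < x) :
    ∫ a, v a * (v a * chiSqOnePDFDeriv (x * v a)) ∂μ < 0 := by
  set f := fun a => -(v a * (v a * chiSqOnePDFDeriv (x * v a)))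
  have hf_int : Integrable f μ :=
    (Integrable.of_bound (by fun_prop) _
      (hvt.mono fun a ha => abs_mul_mul_chiSqOnePDFDeriv_le hx le_rfl ht ha)).neg
  have hf_nonneg : 0 ≤ f := fun a => by
    simpa [f, ← mul_assoc] using mul_nonpos_of_nonneg_of_nonpos (mul_self_nonneg (v a))
      (chiSqOnePDFDeriv_nonpos (x * v a))
  have hf_pos : 0 < ∫ a, f a ∂μ := by
    refine (integral_pos_iff_support_of_nonneg hf_nonneg hf_int).2 (hpos.trans_le ?_)
    refine measure_mono fun a (ha : 0 < v a) => ?_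
    simp only [Function.mem_support, f, neg_ne_zero]
    exact (mul_neg_of_pos_of_neg ha (mul_neg_of_pos_of_neg ha
      (chiSqOnePDFDeriv_neg (mul_pos hx ha)))).ne
  rw [integral_neg] at hf_pos
  linarith

lemma deriv_deriv_integral_chiSqOneCDF_mul_neg (hv : Measurable v) (ht : 0 ≤ t)
    (hvt : ∀ᵐ a ∂μ, v a ≤ t) (hpos : 0 < μ {a | 0 < v a}) {x : ℝ} (hx : 0 < x) :
    deriv (deriv fun x => ∫ a, chiSqOneCDF (x * v a) ∂μ) x < 0 := by
  have h1 : deriv (fun x => ∫ a, chiSqOneCDF (x * v a) ∂μ)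
      =ᶠ[𝓝 x] fun x => ∫ a, v a * chiSqOnePDF (x * v a) ∂μ :=
    (eventually_gt_nhds hx).mono fun y hy =>
      (hasDerivAt_integral_chiSqOneCDF_mul hv hvt hy).deriv
  rw [h1.deriv_eq, (hasDerivAt_integral_mul_chiSqOnePDF_mul hv ht hvt hx).deriv]
  exact integral_mul_mul_chiSqOnePDFDeriv_neg hv ht hvt hpos hx

end Mixture

instance (n : ℕ) : IsProbabilityMeasure (stdGaussianPi n) := by
  unfold stdGaussianPi; infer_instance

instance (n : ℕ) : (stdGaussianPi n).IsOpenPosMeasure := by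
  unfold stdGaussianPi; infer_instance

lemma stdGaussianPi_succ_apply {n : ℕ} (i : Fin (n + 1)) {s : Set (Fin (n + 1) → ℝ)}
    (hs : MeasurableSet s) :
    stdGaussianPi (n + 1) s
      = ∫⁻ z, gaussianReal 0 1 {y | Fin.insertNth i y z ∈ s} ∂stdGaussianPi n := by
  have he := measurePreserving_piFinSuccAbove (fun _ : Fin (n + 1) => gaussianReal 0 1) i
  rw [stdGaussianPi, ← he.symm.measure_preimage hs.nullMeasurableSet,
    Measure.prod_apply_symm (hs.preimage (MeasurableEquiv.measurable _))]
  rfl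

lemma Fcdf_update_eq_integral {n : ℕ} (θ : Fin (n + 1) → ℝ) (i : Fin (n + 1)) (t : ℝ) {x : ℝ}
    (hx : 0 < x) :
    Fcdf (n + 1) (Function.update θ i x) t
      = ∫ z, chiSqOneCDF (x * (t - ∑ j, z j ^ 2 / θ (i.succAbove j))) ∂stdGaussianPi n := by
  have hs : MeasurableSet {w : Fin (n + 1) → ℝ | ∑ j, w j ^ 2 / Function.update θ i x j ≤ t} :=
    measurableSet_le (by fun_prop) measurable_const
  have hslice (z : Fin n → ℝ) : {y | Fin.insertNth i y z ∈
      {w : Fin (n + 1) → ℝ | ∑ j, w j ^ 2 / Function.update θ i x j ≤ t}}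
      = {y | y ^ 2 ≤ x * (t - ∑ j, z j ^ 2 / θ (i.succAbove j))} := by
    ext y
    simp only [mem_ofPred_eq, Fin.sum_univ_succAbove _ i, Fin.insertNth_apply_same,
      Fin.insertNth_apply_succAbove, Function.update_self,
      Function.update_of_ne (Fin.succAbove_ne i _)]
    rw [← le_sub_iff_add_le, div_le_iff₀ hx, mul_comm]
  simp_rw [Fcdf, stdGaussianPi_succ_apply i hs, hslice]
  exact (integral_toReal
    (monotone_gaussianReal_setOf_sq_le.measurable.comp (by fun_prop)).aemeasurable
    (.of_forall fun _ => measure_lt_top _ _)).symm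

/-- the second partial derivative of `F(t;θ)` in each `θ i` is strictly
negative, i.e. `F(t;θ)` is strictly concave in each coordinate. -/
theorem second_partial_deriv_Fcdf_neg (p : ℕ) (θ : Fin p → ℝ) (hθ : ∀ i, 0 < θ i)
    (i : Fin p) (t : ℝ) (ht : 0 < t) :
    deriv (deriv (fun x => Fcdf p (Function.update θ i x) t)) (θ i) < 0 := by
  rcases p with _ | n
  · exact i.elim0
  set S : (Fin n → ℝ) → ℝ := fun z => ∑ j, z j ^ 2 / θ (i.succAbove j)
  have hS : Continuous S := by fun_prop
  have hS_nonneg (z : Fin n → ℝ) : 0 ≤ S z :=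
    Finset.sum_nonneg fun j _ => div_nonneg (sq_nonneg _) (hθ _).le
  have hpos : 0 < stdGaussianPi n {z | 0 < t - S z} :=
    (isOpen_lt continuous_const (continuous_const.sub hS)).measure_pos _ ⟨0, by simp [S, ht]⟩
  have hF : (fun x => Fcdf (n + 1) (Function.update θ i x) t)
      =ᶠ[𝓝 (θ i)] fun x => ∫ z, chiSqOneCDF (x * (t - S z)) ∂stdGaussianPi n :=
    (eventually_gt_nhds (hθ i)).mono fun x hx => Fcdf_update_eq_integral θ i t hx
  rw [hF.deriv.deriv_eq]
  exact deriv_deriv_integral_chiSqOneCDF_mul_neg (hS.measurable.const_sub t) ht.le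
    (.of_forall fun z => by linarith [hS_nonneg z]) hpos (hθ i)
end

section
/- Let F_12(t; θ_1, θ_2) = P(Z_1²/θ_1 + Z_2²/θ_2 ≤ t) for independent standard normals Z_1, Z_2. Then ∂F_12(t; θ_1, θ_2)/∂θ_1 = 2 ∫_0^{√(θ_2 t)} (t − s²/θ_2)^{1/2} θ_1^{-1/2} φ(√(θ_1(t − s²/θ_2))) φ(s) ds, which is strictly positive for t > 0. -/
/-!
Conditioning on `Z₂ = s` gives `F₁₂(θ₁) = E[G(θ₁ (t - Z₂²/θ₂))]` with `G(a) = P(Z₁² ≤ a)`, and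
`G(a) = ∫_{-√a}^{√a} φ` has derivative `φ(√a)/√a` for `a > 0`. So the `θ₁`-derivative of the
integrand is `√c θ₁^{-1/2} φ(√(θ₁ c))` with `c = t - Z₂²/θ₂` (zero when `c ≤ 0`), bounded uniformly
for `θ₁` away from `0`, and one may differentiate under the expectation. Against `φ(s) ds` this
integrand is even and vanishes for `|s| > √(θ₂ t)`, which gives the formula, and it is positive on
`(0, √(θ₂ t))`.
-/

open MeasureTheory ProbabilityTheory Real

noncomputable def F12 (θ₁ θ₂ t : ℝ) : ℝ :=
  (((gaussianReal 0 1).prod (gaussianReal 0 1))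
    {z : ℝ × ℝ | z.1 ^ 2 / θ₁ + z.2 ^ 2 / θ₂ ≤ t}).toReal

open Set Filter Topology
open scoped NNReal

local notation "φ" => gaussianPDFReal 0 1

lemma gaussianPDFReal_le_inv_sqrt (μ : ℝ) (v : ℝ≥0) (x : ℝ) :
    gaussianPDFReal μ v x ≤ (√(2 * π * v))⁻¹ := by
  refine mul_le_of_le_one_right (by positivity) (exp_le_one_iff.mpr ?_)
  exact div_nonpos_of_nonpos_of_nonneg (neg_nonpos.mpr (sq_nonneg _)) (by positivity)

lemma gaussianPDFReal_zero_neg (v : ℝ≥0) (x : ℝ) :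
    gaussianPDFReal 0 v (-x) = gaussianPDFReal 0 v x := by
  simp [gaussianPDFReal]

lemma gaussianPDFReal_zero_abs (v : ℝ≥0) (x : ℝ) :
    gaussianPDFReal 0 v |x| = gaussianPDFReal 0 v x := by
  simp [gaussianPDFReal, sq_abs]

@[fun_prop]
lemma continuous_gaussianPDFReal (μ : ℝ) (v : ℝ≥0) : Continuous (gaussianPDFReal μ v) := by
  unfold gaussianPDFReal; fun_prop

theorem Continuous.hasDerivAt_integral_neg_self {E : Type*} [NormedAddCommGroup E]
    [NormedSpace ℝ E] [CompleteSpace E] {f : ℝ → E} (hf : Continuous f) (u : ℝ) :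
    HasDerivAt (fun u => ∫ y in -u..u, f y) (f u + f (-u)) u := by
  have h := (hf.integral_hasStrictDerivAt 0 u).hasDerivAt.sub
    ((hf.integral_hasStrictDerivAt 0 (-u)).hasDerivAt.scomp u (hasDerivAt_neg u))
  convert h using 1
  · funext v
    exact (intervalIntegral.integral_interval_sub_left (hf.intervalIntegrable _ _)
      (hf.intervalIntegrable _ _)).symm
  · simp [sub_eq_add_neg]

noncomputable def sqGaussianCDF (a : ℝ) : ℝ := (gaussianReal 0 1).real {y | y ^ 2 ≤ a}

lemma sqGaussianCDF_eq_integral {a : ℝ} (ha : 0 ≤ a) :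
    sqGaussianCDF a = ∫ y in -√a..√a, φ y := by
  have hset : {y : ℝ | y ^ 2 ≤ a} = Icc (-√a) √a := by
    ext y; exact Real.sq_le ha
  rw [sqGaussianCDF, measureReal_def, hset, gaussianReal_apply_eq_integral 0 one_ne_zero,
    ENNReal.toReal_ofReal (setIntegral_nonneg measurableSet_Icc fun y _ =>
      gaussianPDFReal_nonneg 0 1 y),
    intervalIntegral.integral_of_le (by linarith [sqrt_nonneg a]), integral_Icc_eq_integral_Ioc]

lemma monotone_sqGaussianCDF : Monotone sqGaussianCDF :=
  fun _ _ hab => measureReal_mono fun _ hy => le_trans hy hab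

lemma sqGaussianCDF_of_nonpos {a : ℝ} (ha : a ≤ 0) : sqGaussianCDF a = 0 :=
  le_antisymm ((monotone_sqGaussianCDF ha).trans_eq (by simp [sqGaussianCDF_eq_integral le_rfl]))
    measureReal_nonneg

lemma hasDerivAt_sqGaussianCDF {a : ℝ} (ha : 0 < a) :
    HasDerivAt sqGaussianCDF (φ √a / √a) a := by
  have h := ((continuous_gaussianPDFReal 0 1).hasDerivAt_integral_neg_self √a).comp a
    (hasDerivAt_sqrt ha.ne')
  have heq : sqGaussianCDF =ᶠ[𝓝 a] fun b => ∫ y in -√b..√b, φ y :=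
    (eventually_ge_nhds ha).mono fun b hb => sqGaussianCDF_eq_integral hb
  refine (h.congr_of_eventuallyEq heq).congr_deriv ?_
  rw [gaussianPDFReal_zero_neg]
  field_simp
  ring

lemma hasDerivAt_sqGaussianCDF_mul {x : ℝ} (hx : 0 < x) (c : ℝ) :
    HasDerivAt (fun x => sqGaussianCDF (x * c)) (√c / √x * φ √(x * c)) x := by
  rcases lt_or_ge 0 c with hc | hc
  · refine ((hasDerivAt_sqGaussianCDF (mul_pos hx hc)).comp x
      (hasDerivAt_mul_const c)).congr_deriv ?_
    rw [sqrt_mul hx.le]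
    field_simp
    rw [sq_sqrt hc.le, mul_comm]
  · have hzero : (fun x => sqGaussianCDF (x * c)) =ᶠ[𝓝 x] fun _ => 0 :=
      (eventually_gt_nhds hx).mono fun y hy =>
        sqGaussianCDF_of_nonpos (mul_nonpos_of_nonneg_of_nonpos hy.le hc)
    simpa [sqrt_eq_zero_of_nonpos hc] using (hasDerivAt_const x (0 : ℝ)).congr_of_eventuallyEq hzero

theorem hasDerivAt_integral_sqGaussianCDF_mul {μ : Measure ℝ} [IsFiniteMeasure μ] {c : ℝ → ℝ}
    {M θ : ℝ} (hc : Measurable c) (hcM : ∀ s, c s ≤ M) (hθ : 0 < θ) :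
    HasDerivAt (fun x => ∫ s, sqGaussianCDF (x * c s) ∂μ)
      (∫ s, √(c s) / √θ * φ √(θ * c s) ∂μ) θ := by
  have hmeas : ∀ x, Measurable fun s => sqGaussianCDF (x * c s) :=
    fun x => monotone_sqGaussianCDF.measurable.comp (hc.const_mul x)
  have hint : Integrable (fun s => sqGaussianCDF (θ * c s)) μ :=
    (integrable_const (1 : ℝ)).mono' (hmeas θ).aestronglyMeasurable <| ae_of_all _ fun _ => by
      rw [sqGaussianCDF, norm_of_nonneg measureReal_nonneg]; exact measureReal_le_one
  have hbound : ∀ s, ∀ x ∈ Ioi (θ / 2),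
      ‖√(c s) / √x * φ √(x * c s)‖ ≤ √M / √(θ / 2) * (√(2 * π))⁻¹ := by
    intro s x hx
    rw [norm_mul, norm_div, norm_of_nonneg (sqrt_nonneg _), norm_of_nonneg (sqrt_nonneg _),
      norm_of_nonneg (gaussianPDFReal_nonneg 0 1 _)]
    gcongr
    · exact gaussianPDFReal_nonneg 0 1 _
    · exact hcM s
    · exact hx.le
    · simpa using gaussianPDFReal_le_inv_sqrt 0 1 _
  have hderiv : ∀ s, ∀ x ∈ Ioi (θ / 2),
      HasDerivAt (fun x => sqGaussianCDF (x * c s)) (√(c s) / √x * φ √(x * c s)) x :=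
    fun s x hx => hasDerivAt_sqGaussianCDF_mul ((half_pos hθ).trans hx) (c s)
  exact (hasDerivAt_integral_of_dominated_loc_of_deriv_le (Ioi_mem_nhds (half_lt_self hθ))
    (.of_forall fun x => (hmeas x).aestronglyMeasurable) hint
    (by fun_prop : Measurable fun s => √(c s) / √θ * φ √(θ * c s)).aestronglyMeasurable
    (ae_of_all _ hbound) (integrable_const _) (ae_of_all _ hderiv)).2

lemma F12_eq_integral_sqGaussianCDF (θ₂ t : ℝ) {x : ℝ} (hx : 0 < x) :
    F12 x θ₂ t = ∫ s, sqGaussianCDF (x * (t - s ^ 2 / θ₂)) ∂gaussianReal 0 1 := by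
  have hS : MeasurableSet {z : ℝ × ℝ | z.1 ^ 2 / x + z.2 ^ 2 / θ₂ ≤ t} :=
    measurableSet_le (by fun_prop) measurable_const
  have hsection : ∀ s, (fun y => (y, s)) ⁻¹' {z : ℝ × ℝ | z.1 ^ 2 / x + z.2 ^ 2 / θ₂ ≤ t}
      = {y | y ^ 2 ≤ x * (t - s ^ 2 / θ₂)} := by
    intro s; ext y
    rw [mem_ofPred_eq, ← div_le_iff₀' hx, le_sub_iff_add_le]; rfl
  rw [F12, Measure.prod_apply_symm hS, ← integral_toReal
    (measurable_measure_prodMk_right hS).aemeasurable (ae_of_all _ fun _ => measure_lt_top _ _)]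
  simp only [hsection]
  rfl

lemma integral_gaussianReal_sqrt_div_sqrt_mul_gaussianPDFReal {θ₁ θ₂ : ℝ} (t : ℝ) (h₁ : 0 < θ₁)
    (h₂ : 0 < θ₂) :
    ∫ s, √(t - s ^ 2 / θ₂) / √θ₁ * φ √(θ₁ * (t - s ^ 2 / θ₂)) ∂gaussianReal 0 1
      = 2 * ∫ s in (0 : ℝ)..√(θ₂ * t), (t - s ^ 2 / θ₂) ^ ((1 : ℝ) / 2) * θ₁ ^ (-(1 : ℝ) / 2)
          * φ √(θ₁ * (t - s ^ 2 / θ₂)) * φ s := by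
  set g : ℝ → ℝ := fun s => φ s * (√(t - s ^ 2 / θ₂) / √θ₁ * φ √(θ₁ * (t - s ^ 2 / θ₂)))
  have hg_abs : ∀ s, g |s| = g s := fun s => by simp only [g, sq_abs, gaussianPDFReal_zero_abs]
  have hg_zero : ∀ s ∈ Ioi 0 \ Ioc 0 √(θ₂ * t), g s = 0 := by
    rintro s ⟨hs0, hsb⟩
    have hlt : θ₂ * t < s ^ 2 := (sqrt_lt' hs0).mp (not_le.mp fun h => hsb ⟨hs0, h⟩)
    have hc : t - s ^ 2 / θ₂ ≤ 0 := by
      rw [sub_nonpos, le_div_iff₀ h₂]; linarith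
    simp [g, sqrt_eq_zero_of_nonpos hc]
  calc _ = ∫ s, g s := integral_gaussianReal_eq_integral_smul one_ne_zero
    _ = ∫ s, g |s| := by simp_rw [hg_abs]
    _ = 2 * ∫ s in Ioi 0, g s := integral_comp_abs
    _ = 2 * ∫ s in Ioc 0 √(θ₂ * t), g s := by
      rw [setIntegral_eq_of_subset_of_forall_sdiff_eq_zero measurableSet_Ioi Ioc_subset_Ioi_self
        hg_zero]
    _ = 2 * ∫ s in (0 : ℝ)..√(θ₂ * t), g s := by
      rw [intervalIntegral.integral_of_le (sqrt_nonneg _)]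
    _ = _ := by
      congr 1
      refine intervalIntegral.integral_congr fun s _ => ?_
      simp only [g]
      -- `sqrt_eq_rpow` holds also for negative arguments, where both sides are `0`
      rw [← sqrt_eq_rpow, neg_div, rpow_neg h₁.le, ← sqrt_eq_rpow]
      ring

lemma integral_rpow_mul_gaussianPDFReal_pos {θ₁ θ₂ t : ℝ} (h₁ : 0 < θ₁) (h₂ : 0 < θ₂) (ht : 0 < t) :
    0 < ∫ s in (0 : ℝ)..√(θ₂ * t), (t - s ^ 2 / θ₂) ^ ((1 : ℝ) / 2) * θ₁ ^ (-(1 : ℝ) / 2)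
          * φ √(θ₁ * (t - s ^ 2 / θ₂)) * φ s := by
  have hcont : Continuous fun s : ℝ => (t - s ^ 2 / θ₂) ^ ((1 : ℝ) / 2) * θ₁ ^ (-(1 : ℝ) / 2)
      * φ √(θ₁ * (t - s ^ 2 / θ₂)) * φ s := by
    fun_prop (disch := norm_num)
  refine intervalIntegral.intervalIntegral_pos_of_pos_on (hcont.intervalIntegrable _ _) ?_
    (sqrt_pos.mpr (mul_pos h₂ ht))
  rintro s ⟨hs0, hsb⟩
  have hc : 0 < t - s ^ 2 / θ₂ := by
    rw [sub_pos, div_lt_iff₀ h₂]; linarith [(lt_sqrt hs0.le).mp hsb]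
  have := gaussianPDFReal_pos 0 1 s one_ne_zero
  have := gaussianPDFReal_pos 0 1 √(θ₁ * (t - s ^ 2 / θ₂)) one_ne_zero
  positivity

/-- the partial derivative of `F₁₂` in `θ₁` has an explicit integral form
and is strictly positive. -/
theorem deriv_F12 (θ₁ θ₂ t : ℝ) (h₁ : 0 < θ₁) (h₂ : 0 < θ₂) (ht : 0 < t) :
    deriv (fun x => F12 x θ₂ t) θ₁
        = 2 * ∫ s in (0:ℝ)..(Real.sqrt (θ₂ * t)),
            (t - s ^ 2 / θ₂) ^ ((1:ℝ)/2) * θ₁ ^ (-(1:ℝ)/2)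
              * gaussianPDFReal 0 1 (Real.sqrt (θ₁ * (t - s ^ 2 / θ₂)))
              * gaussianPDFReal 0 1 s
      ∧ 0 < deriv (fun x => F12 x θ₂ t) θ₁ := by
  have hF : (fun x => F12 x θ₂ t)
      =ᶠ[𝓝 θ₁] fun x => ∫ s, sqGaussianCDF (x * (t - s ^ 2 / θ₂)) ∂gaussianReal 0 1 :=
    (eventually_gt_nhds h₁).mono fun x hx => F12_eq_integral_sqGaussianCDF θ₂ t hx
  have hderiv := hasDerivAt_integral_sqGaussianCDF_mul (μ := gaussianReal 0 1)
    (c := fun s => t - s ^ 2 / θ₂) (M := t) (by fun_prop)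
    (fun s => sub_le_self _ (by positivity)) h₁
  rw [hF.deriv_eq, hderiv.deriv, integral_gaussianReal_sqrt_div_sqrt_mul_gaussianPDFReal t h₁ h₂]
  exact ⟨rfl, mul_pos two_pos (integral_rpow_mul_gaussianPDFReal_pos h₁ h₂ ht)⟩
end
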